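/- Every locally finite group that is ∞-MIF is MIF. -/

import Mathlib

/-- Words in the free product `G * Fₙ` of `G` with the free group on `n` generators. -/
abbrev MixedWord (G : Type*) [Group G] (n : ℕ) :=
  Monoid.Coprod G (FreeGroup (Fin n))

/-- Evaluation of a mixed word, mapping the constants through `f` and substituting
`h i` for the `i`-th variable. -/
def MixedWord.evalHom {G H : Type*} [Group G] [Group H] {n : ℕ}
    (f : G →* H) (h : Fin n → H) (w : MixedWord G n) : H :=
  Monoid.Coprod.lift f (FreeGroup.lift h) w

/-- Evaluation of a mixed word over `G` at `h : Fin n → G`. -/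
def MixedWord.eval {G : Type*} [Group G] {n : ℕ} (h : Fin n → G)
    (w : MixedWord G n) : G :=
  w.evalHom (MonoidHom.id G) h

/-- A word `w ∈ G * Fₙ` is nontrivial if it does not lie in (the canonical copy of) `G`. -/
def MixedWord.IsNontrivial {G : Type*} [Group G] {n : ℕ} (w : MixedWord G n) : Prop :=
  w ∉ (Monoid.Coprod.inl : G →* MixedWord G n).range

/-- `G` is mixed identity free: no nontrivial word in `G * Fₙ` vanishes identically. -/
def MIF (G : Type*) [Group G] : Prop :=
  ∀ (n : ℕ) (w : MixedWord G n), w.IsNontrivial → ∃ h : Fin n → G, w.eval h ≠ 1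

/-- A group is locally finite if every finitely generated subgroup is finite. -/
def LocallyFiniteGrp (G : Type*) [Group G] : Prop :=
  ∀ s : Set G, s.Finite → (Subgroup.closure s : Set G).Finite

/-- `G` is ∞-MIF: for any finite subgroup `G₁` of `G` (containing the constants) and
any infinite sequence of nontrivial words in `G₁ * Fₙ`, if some finite overgroup `Γ`
of `G₁` contains a substitution making all the words nontrivial, then so does `G`. -/
def InftyMIF (G : Type*) [Group G] : Prop :=
  ∀ (G₁ : Subgroup G), Finite G₁ →
    ∀ (n : ℕ) (w : ℕ → MixedWord G₁ n), (∀ i, (w i).IsNontrivial) →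
    (∃ (Γ : Type) (_ : Group Γ), Finite Γ ∧
      ∃ f : G₁ →* Γ, Function.Injective f ∧
        ∃ γ : Fin n → Γ, ∀ i, (w i).evalHom f γ ≠ 1) →
    ∃ h : Fin n → G, ∀ i, (w i).evalHom G₁.subtype h ≠ 1

/-!
A word over a locally finite group involves only finitely many constants, so it is the image of a
word `w₁` over a finite subgroup `G₁`. The free product `G₁ * Fₙ` is residually finite, so a finite
quotient separates `w₁` from `1`; its product with `G₁` is a finite overgroup of `G₁`, and ∞-MIF
applied to the constant sequence `w₁, w₁, …` gives a substitution in `G` not killing `w₁`.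

For residual finiteness of `A * F(α)` with `A` finite, write `g ≠ 1` as a product of letters
(elements of `A` and free generators with their inverses) and let `F` be the union of the `A`-cosets
of its suffix products, a finite set. `A` permutes `F` by left multiplication, and each free
generator `t` acts by any permutation of `F` extending the partial map `x ↦ t * x`. Reading the
letters from the right, the resulting representation moves `1` along the suffix products to `g`.
-/

universe u

open Monoid

section LeftMul

variable {W : Type*} [Group W] {F : Set W}

def ActsByLeftMulOn (ρ : W →* Equiv.Perm F) (s : W) : Prop :=
  ∀ x (hx : x ∈ F) (hsx : s * x ∈ F), ρ s ⟨x, hx⟩ = ⟨s * x, hsx⟩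

theorem ActsByLeftMulOn.inv {ρ : W →* Equiv.Perm F} {s : W} (hs : ActsByLeftMulOn ρ s) :
    ActsByLeftMulOn ρ s⁻¹ := by
  intro x hx hsx
  rw [map_inv, Equiv.Perm.inv_eq_iff_eq, hs _ hsx (by simpa using hx)]
  simp

theorem ActsByLeftMulOn.list_prod_apply {ρ : W →* Equiv.Perm F} :
    ∀ {l : List W}, (∀ s ∈ l, ActsByLeftMulOn ρ s) → ∀ {x : W} (hx : x ∈ F),
      (∀ t ∈ l.tails, t.prod * x ∈ F) → (ρ l.prod ⟨x, hx⟩ : W) = l.prod * x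
  | [], _, x, hx, _ => by simp
  | s :: l, hl, x, hx, hF => by
    have hlx : l.prod * x ∈ F := hF l (by simp)
    have ih : ρ l.prod ⟨x, hx⟩ = ⟨l.prod * x, hlx⟩ := Subtype.ext <|
      list_prod_apply (fun t ht => hl t (List.mem_cons_of_mem s ht)) hx
        fun t ht => hF t <|
          (List.mem_tails ..).2 (((List.mem_tails ..).1 ht).trans (List.suffix_cons s l))
    rw [List.prod_cons, map_mul, Equiv.Perm.mul_apply, ih,
      hl s List.mem_cons_self _ hlx (by simpa [mul_assoc] using hF (s :: l) (by simp))]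
    simp [mul_assoc]

theorem exists_perm_extending_mulLeft [Finite F] (t : W) :
    ∃ σ : Equiv.Perm F, ∀ x (hx : x ∈ F) (htx : t * x ∈ F), σ ⟨x, hx⟩ = ⟨t * x, htx⟩ := by
  obtain ⟨σ, hσ⟩ := Equiv.Perm.exists_extending_pair
    (fun x : {x : F // t * (x : W) ∈ F} => x.1) (fun x => ⟨t * x.1, x.2⟩)
    (fun x y h => Subtype.ext h) (fun x y h => Subtype.ext (Subtype.ext (by simpa using h)))
  exact ⟨σ, fun x hx htx => hσ ⟨⟨x, hx⟩, htx⟩⟩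

def leftMulPermHom {A : Type*} [Group A] (φ : A →* W) (hF : ∀ a, ∀ x ∈ F, φ a * x ∈ F) :
    A →* Equiv.Perm F where
  toFun a := (Equiv.mulLeft (φ a)).subtypePerm fun x =>
    ⟨fun h => by simpa using hF a⁻¹ _ h, hF a x⟩
  map_one' := by ext; simp
  map_mul' a b := by
    ext x
    change φ (a * b) * x = φ a * (φ b * x)
    rw [map_mul, mul_assoc]

theorem leftMulPermHom_actsByLeftMulOn {A : Type*} [Group A] (φ : A →* W)
    (hF : ∀ a, ∀ x ∈ F, φ a * x ∈ F) {ρ : W →* Equiv.Perm F}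
    (hρ : ρ.comp φ = leftMulPermHom φ hF) (a : A) : ActsByLeftMulOn ρ (φ a) := by
  intro x hx hax
  rw [← MonoidHom.comp_apply, hρ]
  rfl

end LeftMul

theorem Monoid.Coprod.closure_range_inl_union_range_of {A α : Type*} [Group A] :
    Subgroup.closure (Set.range (Coprod.inl : A →* Coprod A (FreeGroup α)) ∪
      Set.range (Coprod.inr ∘ FreeGroup.of)) = ⊤ := by
  rw [Subgroup.closure_union, Set.range_comp, ← MonoidHom.map_closure, FreeGroup.closure_range_of,
    ← MonoidHom.range_eq_map, ← MonoidHom.coe_range, Subgroup.closure_eq,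
    Coprod.range_inl_sup_range_inr]

open Pointwise in
instance Monoid.Coprod.residuallyFinite_freeGroup {A α : Type*} [Group A] [Finite A] :
    Group.ResiduallyFinite (Coprod A (FreeGroup α)) := by
  refine Group.residuallyFinite_of_forall_exists_finite_monoidHom fun g hg => ?_
  set S : Set (Coprod A (FreeGroup α)) :=
    Set.range Coprod.inl ∪ Set.range (Coprod.inr ∘ FreeGroup.of)
  obtain ⟨l, hlS, rfl⟩ : ∃ l : List _, (∀ s ∈ l, s ∈ S ∪ S⁻¹) ∧ l.prod = g := by
    refine Submonoid.exists_list_of_mem_closure ?_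
    rw [← Subgroup.closure_toSubmonoid, Coprod.closure_range_inl_union_range_of]
    trivial
  set F := Set.range Coprod.inl * {y | y ∈ l.tails.map List.prod}
  have hFfin : F.Finite := (Set.finite_range _).mul (List.finite_toSet _)
  have : Finite F := hFfin.to_subtype
  have hF : ∀ a, ∀ x ∈ F, Coprod.inl a * x ∈ F := by
    rintro a _ ⟨_, ⟨b, rfl⟩, y, hy, rfl⟩
    exact ⟨Coprod.inl (a * b), ⟨_, rfl⟩, y, hy, by rw [map_mul]; exact mul_assoc _ _ _⟩
  have hsuf : ∀ t ∈ l.tails, t.prod * 1 ∈ F := fun t ht =>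
    ⟨1, ⟨1, map_one _⟩, t.prod, List.mem_map_of_mem ht, by simp⟩
  choose σ hσ using fun i : α =>
    exists_perm_extending_mulLeft (F := F) (Coprod.inr (FreeGroup.of i))
  set ρ := Coprod.lift (leftMulPermHom Coprod.inl hF) (FreeGroup.lift σ)
  have hρS : ∀ s ∈ S, ActsByLeftMulOn ρ s := by
    rintro _ (⟨a, rfl⟩ | ⟨i, rfl⟩)
    · exact leftMulPermHom_actsByLeftMulOn _ hF (Coprod.lift_comp_inl _ _) a
    · intro x hx hix
      simp only [Function.comp_apply, ρ, Coprod.lift_apply_inr, FreeGroup.lift_apply_of]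
      exact hσ i x hx hix
  have hρl : ∀ s ∈ l, ActsByLeftMulOn ρ s := fun s hs => (hlS s hs).elim (hρS s) fun h => by
    simpa using (hρS _ h).inv
  refine ⟨Equiv.Perm F, inferInstance, inferInstance, ρ, fun h1 => hg ?_⟩
  have := ActsByLeftMulOn.list_prod_apply hρl (x := 1) (by simpa using hsuf [] (by simp)) hsuf
  simpa [h1, eq_comm] using this

theorem Group.ResiduallyFinite.exists_finite_monoidHom_ne_one {W : Type u} [Group W]
    [Group.ResiduallyFinite W] {w : W} (hw : w ≠ 1) :
    ∃ (Γ : Type u) (_ : Group Γ), Finite Γ ∧ ∃ φ : W →* Γ, φ w ≠ 1 := by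
  obtain ⟨H, hwH⟩ := Group.exists_finiteIndexNormalSubgroup_notMem w hw
  exact ⟨W ⧸ H.toSubgroup, inferInstance, inferInstance, QuotientGroup.mk' _,
    by rwa [QuotientGroup.mk'_apply, ne_eq, QuotientGroup.eq_one_iff]⟩

theorem LocallyFiniteGrp.finite_sup {G : Type*} [Group G] (hlf : LocallyFiniteGrp G)
    {G₁ G₂ : Subgroup G} [Finite G₁] [Finite G₂] : Finite ↥(G₁ ⊔ G₂) := by
  have := (hlf _ ((G₁ : Set G).toFinite.union (G₂ : Set G).toFinite)).to_subtype
  rwa [Subgroup.closure_union, Subgroup.closure_eq, Subgroup.closure_eq] at this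

theorem LocallyFiniteGrp.exists_finite_subgroup_eq_map {G B : Type*} [Group G] [Monoid B]
    (hlf : LocallyFiniteGrp G) (w : Monoid.Coprod G B) :
    ∃ (G₁ : Subgroup G) (_ : Finite G₁) (w₁ : Monoid.Coprod G₁ B),
      Coprod.map G₁.subtype (MonoidHom.id B) w₁ = w := by
  induction w using Coprod.induction_on with
  | inl g =>
    exact ⟨Subgroup.closure {g}, (hlf {g} (Set.finite_singleton g)).to_subtype,
      Coprod.inl ⟨g, Subgroup.subset_closure rfl⟩, rfl⟩
  | inr b => exact ⟨⊥, inferInstance, Coprod.inr b, rfl⟩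
  | mul x y hx hy =>
    obtain ⟨G₁, _, x₁, rfl⟩ := hx
    obtain ⟨G₂, _, y₂, rfl⟩ := hy
    refine ⟨G₁ ⊔ G₂, hlf.finite_sup,
      Coprod.map (Subgroup.inclusion le_sup_left) (MonoidHom.id B) x₁ *
        Coprod.map (Subgroup.inclusion le_sup_right) (MonoidHom.id B) y₂, ?_⟩
    simp only [map_mul, Coprod.map_map, MonoidHom.id_comp,
      Subgroup.subtype_comp_inclusion]

namespace MixedWord

variable {G H K : Type*} [Group G] [Group H] [Group K] {n : ℕ}

theorem map_evalHom (ψ : H →* K) (f : G →* H) (h : Fin n → H) (w : MixedWord G n) :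
    ψ (w.evalHom f h) = w.evalHom (ψ.comp f) (ψ ∘ h) := by
  simp only [evalHom]
  rw [← MonoidHom.comp_apply]
  congr 1
  apply Coprod.hom_ext <;> ext <;> simp

theorem evalHom_comp_inl (φ : MixedWord G n →* H) (w : MixedWord G n) :
    w.evalHom (φ.comp Coprod.inl) (fun i => φ (Coprod.inr (FreeGroup.of i))) = φ w := by
  simp only [evalHom]
  congr 1
  apply Coprod.hom_ext <;> ext <;> simp

theorem eval_map (f : H →* G) (h : Fin n → G) (w : MixedWord H n) :
    eval h (Coprod.map f (MonoidHom.id _) w) = w.evalHom f h := by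
  simp only [eval, evalHom]
  rw [← MonoidHom.comp_apply]
  congr 1
  apply Coprod.hom_ext <;> ext <;> simp

theorem IsNontrivial.ne_one {w : MixedWord G n} (hw : w.IsNontrivial) : w ≠ 1 :=
  fun h => hw ⟨1, by rw [h, map_one]⟩

theorem IsNontrivial.of_map {f : H →* G} {w : MixedWord H n}
    (hw : IsNontrivial (Coprod.map f (MonoidHom.id _) w)) : w.IsNontrivial :=
  fun ⟨a, ha⟩ => hw ⟨f a, by rw [← ha, Coprod.map_apply_inl]⟩

theorem exists_finite_evalHom_ne_one {G : Type u} [Group G] [Finite G] {w : MixedWord G n}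
    (hw : w ≠ 1) :
    ∃ (Γ : Type u) (_ : Group Γ), Finite Γ ∧ ∃ f : G →* Γ, Function.Injective f ∧
      ∃ γ : Fin n → Γ, w.evalHom f γ ≠ 1 := by
  obtain ⟨Γ, _, _, φ, hφ⟩ := Group.ResiduallyFinite.exists_finite_monoidHom_ne_one hw
  refine ⟨Γ × G, inferInstance, inferInstance, (φ.comp Coprod.inl).prod (MonoidHom.id G),
    fun a b hab => congrArg Prod.snd hab,
    fun i => (φ (Coprod.inr (FreeGroup.of i)), 1), fun h1 => hφ ?_⟩
  have := congrArg (MonoidHom.fst Γ G) h1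
  rw [map_evalHom, MonoidHom.fst_comp_prod, map_one] at this
  exact (evalHom_comp_inl φ w).symm.trans this

end MixedWord

/-- Every locally finite ∞-MIF group is MIF. -/
theorem stmt_9 (G : Type) [Group G] (hlf : LocallyFiniteGrp G) (h : InftyMIF G) :
    MIF G := by
  intro n w hw
  obtain ⟨G₁, hG₁, w₁, rfl⟩ := hlf.exists_finite_subgroup_eq_map w
  have hw₁ := MixedWord.IsNontrivial.of_map hw
  obtain ⟨Γ, _, hΓ, f, hf, γ, hγ⟩ := MixedWord.exists_finite_evalHom_ne_one hw₁.ne_one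
  obtain ⟨h', hh'⟩ :=
    h G₁ hG₁ n (fun _ => w₁) (fun _ => hw₁) ⟨Γ, _, hΓ, f, hf, γ, fun _ => hγ⟩
  exact ⟨h', by rw [MixedWord.eval_map]; exact hh' 0⟩
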